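/- Let X be a proper geodesic δ-hyperbolic space and C ⊆ ∂X a subset of the Gromov boundary. Then the quasiconvex hull QC-Hull(C) — the union of all geodesic lines with both endpoints in C — is 36δ-quasiconvex: every point of every geodesic segment joining two points of QC-Hull(C) lies at distance at most 36δ from QC-Hull(C). -/
import Mathlib


open Filter Metric Set
open scoped ENNReal

/-- The Gromov product `(y,z)_x`. -/
noncomputable def gp {X : Type*} [MetricSpace X] (x y z : X) : ℝ :=
  (dist x y + dist x z - dist y z) / 2

/-- `X` is a geodesic metric space. -/
def IsGeodesicSpace (X : Type*) [MetricSpace X] : Prop :=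
  ∀ a b : X, ∃ γ : ℝ → X, γ 0 = a ∧ γ (dist a b) = b ∧
    ∀ s ∈ Set.Icc (0 : ℝ) (dist a b), ∀ t ∈ Set.Icc (0 : ℝ) (dist a b),
      dist (γ s) (γ t) = |s - t|

/-- The 4-points condition of `δ`-hyperbolicity: `(x,z)_w ≥ min ((x,y)_w) ((y,z)_w) - δ`. -/
def Hyp4 (X : Type*) [MetricSpace X] (δ : ℝ) : Prop :=
  ∀ w x y z : X, gp w x z ≥ min (gp w x y) (gp w y z) - δ

/-- A geodesic ray (parametrized on `[0,∞)`). -/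
def IsGeodRay {X : Type*} [MetricSpace X] (ξ : ℝ → X) : Prop :=
  ∀ s t : ℝ, 0 ≤ s → 0 ≤ t → dist (ξ s) (ξ t) = |s - t|

/-- A geodesic line. -/
def IsGeodLine {X : Type*} [MetricSpace X] (γ : ℝ → X) : Prop :=
  ∀ s t : ℝ, dist (γ s) (γ t) = |s - t|

/-- A sequence converging to infinity in the Gromov sense. -/
def IsGromovSeq {X : Type*} [MetricSpace X] (x : X) (u : ℕ → X) : Prop :=
  Filter.Tendsto (fun p : ℕ × ℕ => gp x (u p.1) (u p.2)) Filter.atTop Filter.atTop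

/-- Equivalence of sequences converging to infinity. -/
def BEquiv {X : Type*} [MetricSpace X] (x : X)
    (u v : {u : ℕ → X // IsGromovSeq x u}) : Prop :=
  Filter.Tendsto (fun p : ℕ × ℕ => gp x (u.1 p.1) (v.1 p.2)) Filter.atTop Filter.atTop

/-- The Gromov boundary of `X` (with basepoint `x`). -/
def Boundary {X : Type*} [MetricSpace X] (x : X) := Quot (BEquiv x)

/-- The sequence `u` converges to the boundary point `z`. -/
def SeqLimit {X : Type*} [MetricSpace X] (x : X) (u : ℕ → X) (z : Boundary x) : Prop :=
  ∃ hu : IsGromovSeq x u, Quot.mk (BEquiv x) ⟨u, hu⟩ = z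

/-- `z` is the positive endpoint of the geodesic line `γ`. -/
def LineEndPlus {X : Type*} [MetricSpace X] (x : X) (γ : ℝ → X) (z : Boundary x) : Prop :=
  SeqLimit x (fun n : ℕ => γ n) z

/-- `z` is the negative endpoint of the geodesic line `γ`. -/
def LineEndMinus {X : Type*} [MetricSpace X] (x : X) (γ : ℝ → X) (z : Boundary x) : Prop :=
  SeqLimit x (fun n : ℕ => γ (-(n : ℝ))) z

/-- The quasiconvex hull of a subset `C` of the Gromov boundary: the union of all
geodesic lines with both endpoints in `C`. -/
def QCHull {X : Type*} [MetricSpace X] (x : X) (C : Set (Boundary x)) : Set X :=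
  {p | ∃ γ : ℝ → X, IsGeodLine γ ∧ (∃ z ∈ C, LineEndPlus x γ z) ∧
       (∃ z ∈ C, LineEndMinus x γ z) ∧ ∃ t : ℝ, γ t = p}

open Topology

section helpers
variable {X : Type*} [MetricSpace X]

lemma gp_nonneg (x y z : X) : 0 ≤ gp x y z := by
  have h := dist_triangle y x z
  have h2 : dist y x = dist x y := dist_comm y x
  unfold gp; linarith

lemma gp_comm (x y z : X) : gp x y z = gp x z y := by
  unfold gp; rw [dist_comm y z]; ring

lemma gp_le_dist (x y z : X) : gp x y z ≤ dist x y := by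
  have h2 : dist x z ≤ dist x y + dist y z := dist_triangle x y z
  unfold gp; linarith

lemma gp_move_base (x x' y z : X) : gp x y z - dist x x' ≤ gp x' y z := by
  have h1 := dist_triangle x x' y
  have h2 := dist_triangle x x' z
  unfold gp; linarith

lemma gp_move_snd (x y y' z : X) : gp x y z - dist y y' ≤ gp x y' z := by
  have h3 : dist y' z ≤ dist y' y + dist y z := dist_triangle y' y z
  have h4 : dist y' y = dist y y' := dist_comm _ _
  have h5 : dist x y ≤ dist x y' + dist y' y := by
    have := dist_triangle x y' y; linarith
  unfold gp; linarith

lemma exists_near {δ : ℝ} (hhyp : Hyp4 X δ)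
    (g : ℝ → X) (a b : ℝ) (hab : a ≤ b)
    (hiso : ∀ s ∈ Set.Icc a b, ∀ t ∈ Set.Icc a b, dist (g s) (g t) = |s - t|)
    (w : X) :
    ∃ s ∈ Set.Icc a b, dist w (g s) ≤ gp w (g a) (g b) + 2 * δ := by
  have ha : a ∈ Set.Icc a b := ⟨le_refl a, hab⟩
  have hb : b ∈ Set.Icc a b := ⟨hab, le_refl b⟩
  have hdab : dist (g a) (g b) = b - a := by
    rw [hiso a ha b hb, abs_of_nonpos (by linarith)]; ring
  set G := gp (g a) w (g b) with hG
  have hG0 : 0 ≤ G := gp_nonneg _ _ _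
  have hGle : G ≤ b - a := by
    calc G = gp (g a) (g b) w := gp_comm _ _ _
    _ ≤ dist (g a) (g b) := gp_le_dist _ _ _
    _ = b - a := hdab
  have hs0 : a + G ∈ Set.Icc a b := ⟨by linarith, by linarith⟩
  refine ⟨a + G, hs0, ?_⟩
  have hdau : dist (g a) (g (a + G)) = G := by
    rw [hiso a ha (a + G) hs0, abs_of_nonpos (by linarith)]; ring
  have hdub : dist (g (a + G)) (g b) = (b - a) - G := by
    rw [hiso (a + G) hs0 b hb, abs_of_nonpos (by linarith)]; ring
  have key := hhyp w (g a) (g (a + G)) (g b)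
  have hGval : G = (dist (g a) w + (b - a) - dist w (g b)) / 2 := by
    rw [hG]; unfold gp; rw [hdab]
  have hwa : dist (g a) w = dist w (g a) := dist_comm _ _
  obtain ⟨u, hu⟩ : ∃ u, g (a + G) = u := ⟨_, rfl⟩
  rw [hu] at hdau hdub
  rw [hu]
  have e1 : gp w (g a) u = (gp w (g a) (g b) + dist w u) / 2 := by
    unfold gp; rw [hdau, hdab, hGval, hwa]; ring
  have e2 : gp w u (g b) = (gp w (g a) (g b) + dist w u) / 2 := by
    unfold gp
    rw [hdub, hdab, hGval, hwa]; ring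
  rw [hu] at key
  rw [e1, e2, min_self] at key
  unfold gp at key ⊢
  linarith

lemma gp_ge_min_right {g : ℝ → X} (hg : IsGeodLine g) (m : X) {c s s' : ℝ}
    (hs : c ≤ s) (hs' : c ≤ s') :
    min (s - c) (s' - c) - dist m (g c) ≤ gp m (g s) (g s') := by
  have h1 : dist (g c) (g s) = s - c := by
    rw [hg, abs_of_nonpos (by linarith)]; ring
  have h2 : dist (g c) (g s') = s' - c := by
    rw [hg, abs_of_nonpos (by linarith)]; ring
  have t1 : s - c - dist m (g c) ≤ dist m (g s) := by
    have := dist_triangle (g c) m (g s)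
    have hc : dist (g c) m = dist m (g c) := dist_comm _ _
    linarith
  have t2 : s' - c - dist m (g c) ≤ dist m (g s') := by
    have := dist_triangle (g c) m (g s')
    have hc : dist (g c) m = dist m (g c) := dist_comm _ _
    linarith
  have h3 : dist (g s) (g s') = |s - s'| := hg s s'
  unfold gp
  rcases le_total s s' with h | h
  · rw [min_eq_left (by linarith)]
    rw [abs_of_nonpos (by linarith)] at h3
    linarith
  · rw [min_eq_right (by linarith)]
    rw [abs_of_nonneg (by linarith)] at h3
    linarith

lemma gp_ge_min_left {g : ℝ → X} (hg : IsGeodLine g) (m : X) {c s s' : ℝ}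
    (hs : s ≤ c) (hs' : s' ≤ c) :
    min (c - s) (c - s') - dist m (g c) ≤ gp m (g s) (g s') := by
  have hneg : IsGeodLine (fun u => g (-u)) := by
    intro u v
    rw [hg]
    rw [show -u - -v = -(u - v) by ring, abs_neg]
  have h := gp_ge_min_right hneg m (c := -c) (s := -s) (s' := -s') (by linarith) (by linarith)
  simp only [neg_neg] at h
  rw [show -s - -c = c - s from by ring, show -s' - -c = c - s' from by ring] at h
  exact h

lemma min_shift {x y c j : ℝ} (hc : 0 ≤ c) (hx : j - c ≤ x) : min j y - c ≤ min x y := by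
  rcases le_total x y with h | h
  · rw [min_eq_left h]; have := min_le_left j y; linarith
  · rw [min_eq_right h]; have := min_le_right j y; linarith

lemma min_sub (a b c : ℝ) : min a b - c = min (a - c) (b - c) := by
  rcases le_total a b with h | h
  · rw [min_eq_left h, min_eq_left (by linarith)]
  · rw [min_eq_right h, min_eq_right (by linarith)]

lemma tendsto_min_aux {f : ℕ × ℕ → ℝ} {g h : ℕ → ℝ}
    (hg : Tendsto g atTop atTop) (hh : Tendsto h atTop atTop)
    (hf : ∀ᶠ p : ℕ × ℕ in atTop, min (g p.1) (h p.2) ≤ f p) :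
    Tendsto f atTop atTop := by
  rw [Filter.tendsto_atTop]
  intro b
  have h1 : ∀ᶠ n in (atTop : Filter ℕ), b ≤ g n := hg.eventually_ge_atTop _
  have h2 : ∀ᶠ n in (atTop : Filter ℕ), b ≤ h n := hh.eventually_ge_atTop _
  rw [← Filter.prod_atTop_atTop_eq] at hf ⊢
  filter_upwards [hf, h1.prod_inl atTop, h2.prod_inr atTop] with p hp hp1 hp2
  exact le_trans (le_min hp1 hp2) hp

lemma tendsto_cast_sub (c : ℝ) : Tendsto (fun n : ℕ => (n : ℝ) - c) atTop atTop := by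
  have := Filter.tendsto_atTop_add_const_right atTop (-c)
      (tendsto_natCast_atTop_atTop (R := ℝ))
  simpa [sub_eq_add_neg] using this

lemma tendsto_const_add_cast_sub (a c : ℝ) :
    Tendsto (fun n : ℕ => a + (n : ℝ) - c) atTop atTop := by
  have := Filter.tendsto_atTop_add_const_right atTop (a - c)
      (tendsto_natCast_atTop_atTop (R := ℝ))
  refine this.congr fun n => by ring

end helpers

/-- In a proper geodesic `δ`-hyperbolic space, the quasiconvex hull of a subset `C`
of the Gromov boundary is `36δ`-quasiconvex: every point of every geodesic segment
joining two points of `QC-Hull(C)` lies at distance at most `36δ` from `QC-Hull(C)`. -/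
theorem qcHull_quasiconvex {X : Type*} [MetricSpace X] [ProperSpace X]
    (δ : ℝ) (hδ : 0 ≤ δ) (hgeo : IsGeodesicSpace X) (hhyp : Hyp4 X δ)
    (x₀ : X) (C : Set (Boundary x₀)) :
    ∀ p ∈ QCHull x₀ C, ∀ q ∈ QCHull x₀ C, ∀ σ : ℝ → X,
      σ 0 = p → σ (dist p q) = q →
      (∀ s ∈ Set.Icc (0 : ℝ) (dist p q), ∀ t ∈ Set.Icc (0 : ℝ) (dist p q),
        dist (σ s) (σ t) = |s - t|) →
      ∀ t ∈ Set.Icc (0 : ℝ) (dist p q), Metric.infDist (σ t) (QCHull x₀ C) ≤ 36 * δ := by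
  intro p hp q hq σ hσ0 hσd hσiso t ht
  obtain ⟨γ₁, hγ₁, ⟨zP, hzPC, hzP⟩, ⟨zM, hzMC, hzM⟩, a, hγ₁a⟩ := hp
  obtain ⟨γ₂, hγ₂, ⟨zQ, hzQC, hzQ⟩, ⟨zN, hzNC, hzN⟩, b, hγ₂b⟩ := hq
  set m := σ t with hm
  have hdpq : (0:ℝ) ≤ dist p q := dist_nonneg
  have hmem0 : (0:ℝ) ∈ Set.Icc (0:ℝ) (dist p q) := ⟨le_refl _, hdpq⟩
  have hmemd : dist p q ∈ Set.Icc (0:ℝ) (dist p q) := ⟨hdpq, le_refl _⟩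
  have hmp : dist m p = t := by
    rw [hm, ← hσ0, hσiso t ht 0 hmem0, sub_zero, abs_of_nonneg ht.1]
  have hmq : dist m q = dist p q - t := by
    conv_lhs => rw [hm, ← hσd]
    rw [hσiso t ht _ hmemd, abs_of_nonpos (by linarith [ht.2])]; ring
  have hgpm : gp m p q = 0 := by unfold gp; rw [hmp, hmq]; ring
  suffices hsuf : ∃ y ∈ QCHull x₀ C, dist m y ≤ 6 * δ by
    obtain ⟨y, hy, hdy⟩ := hsuf
    have h := Metric.infDist_le_dist_of_mem (x := m) hy
    linarith
  have hγ₁hull : ∀ s : ℝ, γ₁ s ∈ QCHull x₀ C :=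
    fun s => ⟨γ₁, hγ₁, ⟨zP, hzPC, hzP⟩, ⟨zM, hzMC, hzM⟩, s, rfl⟩
  have hγ₂hull : ∀ s : ℝ, γ₂ s ∈ QCHull x₀ C :=
    fun s => ⟨γ₂, hγ₂, ⟨zQ, hzQC, hzQ⟩, ⟨zN, hzNC, hzN⟩, s, rfl⟩
  choose α hα0 hαd hαiso using fun n : ℕ => hgeo (γ₁ (a - (n:ℝ))) (γ₂ (b + (n:ℝ)))
  choose β hβ0 hβd hβiso using fun n : ℕ => hgeo (γ₁ (a - (n:ℝ))) q
  choose ρ hρ0 hρd hρiso using fun n : ℕ => hgeo p (γ₂ (b + (n:ℝ)))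
  -- basic distance facts
  have hAp : ∀ n : ℕ, dist (γ₁ (a - (n:ℝ))) p = n := by
    intro n
    rw [← hγ₁a, hγ₁, show a - (n:ℝ) - a = -(n:ℝ) by ring, abs_neg,
      abs_of_nonneg (Nat.cast_nonneg n)]
  have hBq : ∀ n : ℕ, dist (γ₂ (b + (n:ℝ))) q = n := by
    intro n
    rw [← hγ₂b, hγ₂, show b + (n:ℝ) - b = (n:ℝ) by ring,
      abs_of_nonneg (Nat.cast_nonneg n)]
  have hAq : ∀ n : ℕ, dist (γ₁ (a - (n:ℝ))) q ≤ n + dist p q := by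
    intro n
    have h := dist_triangle (γ₁ (a - (n:ℝ))) p q
    rw [hAp n] at h; exact h
  have hpB : ∀ n : ℕ, dist p (γ₂ (b + (n:ℝ))) ≤ dist p q + n := by
    intro n
    have h := dist_triangle p q (γ₂ (b + (n:ℝ)))
    rw [dist_comm q _, hBq n] at h; exact h
  -- the dichotomy
  have dich : ∀ n : ℕ, (∃ y ∈ QCHull x₀ C, dist m y ≤ 6 * δ) ∨
      ∃ s ∈ Set.Icc (0:ℝ) (dist (γ₁ (a - (n:ℝ))) (γ₂ (b + (n:ℝ)))),
        dist m (α n s) ≤ 6 * δ := by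
    intro n
    have hcast : (0:ℝ) ≤ (n:ℝ) := Nat.cast_nonneg n
    have h1 := hhyp m p (γ₁ (a - (n:ℝ))) q
    rw [hgpm] at h1
    rcases le_total (gp m p (γ₁ (a - (n:ℝ)))) (gp m (γ₁ (a - (n:ℝ))) q) with hc | hc
    · rw [min_eq_left hc] at h1
      have hble : gp m p (γ₁ (a - (n:ℝ))) ≤ δ := by linarith
      obtain ⟨s', hs'mem, hs'⟩ := exists_near hhyp γ₁ (a - (n:ℝ)) a (by linarith)
        (fun s _ u _ => hγ₁ s u) m
      left
      refine ⟨γ₁ s', hγ₁hull s', ?_⟩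
      rw [hγ₁a] at hs'
      have he : gp m (γ₁ (a - (n:ℝ))) p = gp m p (γ₁ (a - (n:ℝ))) := gp_comm _ _ _
      linarith
    · rw [min_eq_right hc] at h1
      have hble : gp m (γ₁ (a - (n:ℝ))) q ≤ δ := by linarith
      obtain ⟨s₁, hs₁mem, hs₁⟩ := exists_near hhyp (β n) 0 (dist (γ₁ (a - (n:ℝ))) q)
        dist_nonneg (hβiso n) m
      rw [hβ0 n, hβd n] at hs₁
      have hdmw : dist m (β n s₁) ≤ 3 * δ := by linarith
      have hdAw : dist (γ₁ (a - (n:ℝ))) (β n s₁) = s₁ := by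
        rw [← hβ0 n, hβiso n 0 ⟨le_refl _, dist_nonneg⟩ s₁ hs₁mem,
          abs_of_nonpos (by linarith [hs₁mem.1]), neg_sub, sub_zero]
      have hdwq : dist (β n s₁) q = dist (γ₁ (a - (n:ℝ))) q - s₁ := by
        conv_lhs => rw [← hβd n]
        rw [hβiso n s₁ hs₁mem _ ⟨dist_nonneg, le_refl _⟩,
          abs_of_nonpos (by linarith [hs₁mem.2]), neg_sub]
      have hgpw : gp (β n s₁) (γ₁ (a - (n:ℝ))) q = 0 := by
        unfold gp
        rw [dist_comm (β n s₁) (γ₁ (a - (n:ℝ))), hdAw, hdwq]; ring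
      have h2 := hhyp (β n s₁) (γ₁ (a - (n:ℝ))) (γ₂ (b + (n:ℝ))) q
      rw [hgpw] at h2
      rcases le_total (gp (β n s₁) (γ₁ (a - (n:ℝ))) (γ₂ (b + (n:ℝ))))
          (gp (β n s₁) (γ₂ (b + (n:ℝ))) q) with hc2 | hc2
      · rw [min_eq_left hc2] at h2
        obtain ⟨s₂, hs₂mem, hs₂⟩ := exists_near hhyp (α n) 0
          (dist (γ₁ (a - (n:ℝ))) (γ₂ (b + (n:ℝ)))) dist_nonneg (hαiso n) (β n s₁)
        rw [hα0 n, hαd n] at hs₂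
        right
        refine ⟨s₂, hs₂mem, ?_⟩
        calc dist m (α n s₂) ≤ dist m (β n s₁) + dist (β n s₁) (α n s₂) :=
              dist_triangle _ _ _
          _ ≤ 6 * δ := by linarith
      · rw [min_eq_right hc2] at h2
        obtain ⟨s₃, hs₃mem, hs₃⟩ := exists_near hhyp γ₂ b (b + (n:ℝ)) (by linarith)
          (fun s _ u _ => hγ₂ s u) (β n s₁)
        left
        refine ⟨γ₂ s₃, hγ₂hull s₃, ?_⟩
        rw [hγ₂b] at hs₃
        have he : gp (β n s₁) q (γ₂ (b + (n:ℝ))) = gp (β n s₁) (γ₂ (b + (n:ℝ))) q :=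
          gp_comm _ _ _
        calc dist m (γ₂ s₃) ≤ dist m (β n s₁) + dist (β n s₁) (γ₂ s₃) :=
              dist_triangle _ _ _
          _ ≤ 6 * δ := by linarith
  by_cases hQ : ∃ y ∈ QCHull x₀ C, dist m y ≤ 6 * δ
  · exact hQ
  have hP : ∀ n : ℕ, ∃ s ∈ Set.Icc (0:ℝ) (dist (γ₁ (a - (n:ℝ))) (γ₂ (b + (n:ℝ)))),
      dist m (α n s) ≤ 6 * δ := fun n => (dich n).resolve_left hQ
  choose sf hsmem hs6 using hP
  -- lower bounds on sf n and (d n - sf n)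
  have hdist_a : ∀ n : ℕ, dist (γ₁ (a - (n:ℝ))) (α n (sf n)) = sf n := by
    intro n
    rw [← hα0 n, hαiso n 0 ⟨le_refl _, dist_nonneg⟩ (sf n) (hsmem n),
      abs_of_nonpos (by linarith [(hsmem n).1]), neg_sub, sub_zero]
  have hdist_b : ∀ n : ℕ, dist (α n (sf n)) (γ₂ (b + (n:ℝ))) =
      dist (γ₁ (a - (n:ℝ))) (γ₂ (b + (n:ℝ))) - sf n := by
    intro n
    conv_lhs => rw [← hαd n]
    rw [hαiso n (sf n) (hsmem n) _ ⟨dist_nonneg, le_refl _⟩,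
      abs_of_nonpos (by linarith [(hsmem n).2]), neg_sub]
  have hslow : ∀ n : ℕ, (n:ℝ) - dist m p - 6 * δ ≤ sf n := by
    intro n
    have h2 := dist_triangle (γ₁ (a - (n:ℝ))) (α n (sf n)) m
    have h3 := dist_triangle (γ₁ (a - (n:ℝ))) m p
    have h4 : dist (α n (sf n)) m = dist m (α n (sf n)) := dist_comm _ _
    have h5 := hs6 n
    rw [hdist_a n] at h2
    rw [hAp n] at h3
    linarith
  have hshigh : ∀ n : ℕ, (n:ℝ) - dist m q - 6 * δ ≤
      dist (γ₁ (a - (n:ℝ))) (γ₂ (b + (n:ℝ))) - sf n := by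
    intro n
    have h2 := dist_triangle m (α n (sf n)) (γ₂ (b + (n:ℝ)))
    have h3 := dist_triangle (γ₂ (b + (n:ℝ))) m q
    have h4 : dist (γ₂ (b + (n:ℝ))) m = dist m (γ₂ (b + (n:ℝ))) := dist_comm _ _
    have h5 := hs6 n
    rw [hdist_b n] at h2
    rw [hBq n] at h3
    linarith
  -- ultrafilter limit construction
  set U : Ultrafilter ℕ := Ultrafilter.of atTop with hU
  have hUle : (U : Filter ℕ) ≤ atTop := Ultrafilter.of_le _
  have hmemIcc : ∀ t' : ℝ, ∀ᶠ (n : ℕ) in (atTop : Filter ℕ),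
      sf n + t' ∈ Set.Icc (0:ℝ) (dist (γ₁ (a - (n:ℝ))) (γ₂ (b + (n:ℝ)))) := by
    intro t'
    have hev := (tendsto_natCast_atTop_atTop (R := ℝ)).eventually_ge_atTop
      (dist m p + dist m q + 6 * δ + |t'|)
    filter_upwards [hev] with n hn
    have h1 := hslow n
    have h2 := hshigh n
    have h3 := neg_abs_le t'
    have h4 := le_abs_self t'
    have h5 : (0:ℝ) ≤ dist m p := dist_nonneg
    have h6 : (0:ℝ) ≤ dist m q := dist_nonneg
    constructor <;> [skip; skip] <;> linarith
  have hball : ∀ t' : ℝ, ∀ᶠ (n : ℕ) in (atTop : Filter ℕ),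
      α n (sf n + t') ∈ Metric.closedBall m (|t'| + 6 * δ) := by
    intro t'
    filter_upwards [hmemIcc t'] with n hn
    have h1 : dist (α n (sf n + t')) (α n (sf n)) = |t'| := by
      rw [hαiso n _ hn _ (hsmem n)]
      congr 1; ring
    have h2 := dist_triangle (α n (sf n + t')) (α n (sf n)) m
    have h3 : dist (α n (sf n)) m = dist m (α n (sf n)) := dist_comm _ _
    have h4 := hs6 n
    rw [Metric.mem_closedBall]
    rw [h1] at h2
    linarith
  have hlim : ∀ t' : ℝ, ∃ y : X, Tendsto (fun n => α n (sf n + t')) (U : Filter ℕ) (𝓝 y) := by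
    intro t'
    have hmem : {n : ℕ | α n (sf n + t') ∈ Metric.closedBall m (|t'| + 6 * δ)} ∈
        (U : Filter ℕ) := hUle ((hball t').filter_mono le_rfl)
    have hle : (Ultrafilter.map (fun n => α n (sf n + t')) U : Filter X) ≤
        Filter.principal (Metric.closedBall m (|t'| + 6 * δ)) := by
      rw [Filter.le_principal_iff, Ultrafilter.coe_map, Filter.mem_map]
      exact hmem
    obtain ⟨y, _, hy⟩ := (isCompact_closedBall m (|t'| + 6 * δ)).ultrafilter_le_nhds
      (Ultrafilter.map (fun n => α n (sf n + t')) U) hle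
    refine ⟨y, ?_⟩
    rw [Filter.Tendsto]
    rw [Ultrafilter.coe_map] at hy
    exact hy
  choose L hL using hlim
  have hLline : IsGeodLine L := by
    intro u v
    have h1 : Tendsto (fun n => dist (α n (sf n + u)) (α n (sf n + v))) (U : Filter ℕ)
        (𝓝 (dist (L u) (L v))) := (hL u).dist (hL v)
    have h2 : ∀ᶠ (n : ℕ) in (U : Filter ℕ),
        dist (α n (sf n + u)) (α n (sf n + v)) = |u - v| := by
      filter_upwards [hUle (hmemIcc u), hUle (hmemIcc v)] with n hnu hnv
      rw [hαiso n _ hnu _ hnv]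
      congr 1; ring
    exact tendsto_nhds_unique (h1.congr' h2) tendsto_const_nhds
  have hLm : dist m (L 0) ≤ 6 * δ := by
    have h1 : Tendsto (fun n => dist m (α n (sf n + 0))) (U : Filter ℕ)
        (𝓝 (dist m (L 0))) := tendsto_const_nhds.dist (hL 0)
    refine le_of_tendsto h1 (Filter.Eventually.of_forall fun n => ?_)
    rw [add_zero]
    exact hs6 n
  have hgp_lim : ∀ (u : ℝ) (z : X), Tendsto (fun n => gp m (α n (sf n + u)) z)
      (U : Filter ℕ) (𝓝 (gp m (L u) z)) := by
    intro u z
    have h1 : Tendsto (fun n => dist m (α n (sf n + u))) (U : Filter ℕ)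
        (𝓝 (dist m (L u))) := tendsto_const_nhds.dist (hL u)
    have h2 : Tendsto (fun n => dist (α n (sf n + u)) z) (U : Filter ℕ)
        (𝓝 (dist (L u) z)) := (hL u).dist tendsto_const_nhds
    unfold gp
    exact ((h1.add_const (dist m z)).sub h2).div_const 2
  set D0 : ℝ := dist m p + dist m q + dist p q + 12 * δ with hD0
  have hplus : ∀ u v : ℝ, 0 ≤ u → 0 ≤ v → min u v - D0 ≤ gp m (L u) (γ₂ (b + v)) := by
    intro u v hu hv
    refine ge_of_tendsto (hgp_lim u (γ₂ (b + v))) ?_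
    refine Filter.Eventually.filter_mono hUle ?_
    filter_upwards [hmemIcc u] with n hn
    have hcast : (0:ℝ) ≤ (n:ℝ) := Nat.cast_nonneg n
    have hdAv : dist (γ₁ (a - (n:ℝ))) (α n (sf n + u)) = sf n + u := by
      rw [← hα0 n, hαiso n 0 ⟨le_refl _, dist_nonneg⟩ _ hn,
        abs_of_nonpos (by linarith [hn.1]), neg_sub, sub_zero]
    have hdvB : dist (α n (sf n + u)) (γ₂ (b + (n:ℝ))) =
        dist (γ₁ (a - (n:ℝ))) (γ₂ (b + (n:ℝ))) - (sf n + u) := by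
      conv_lhs => rw [← hαd n]
      rw [hαiso n _ hn _ ⟨dist_nonneg, le_refl _⟩,
        abs_of_nonpos (by linarith [hn.2]), neg_sub]
    have hgpv : gp (α n (sf n + u)) (γ₁ (a - (n:ℝ))) (γ₂ (b + (n:ℝ))) = 0 := by
      unfold gp
      rw [dist_comm (α n (sf n + u)) (γ₁ (a - (n:ℝ))), hdAv, hdvB]; ring
    have h1 := hhyp (α n (sf n + u)) (γ₁ (a - (n:ℝ))) q (γ₂ (b + (n:ℝ)))
    rw [hgpv] at h1
    rcases le_total (gp (α n (sf n + u)) (γ₁ (a - (n:ℝ))) q)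
        (gp (α n (sf n + u)) q (γ₂ (b + (n:ℝ)))) with hc | hc
    · rw [min_eq_left hc] at h1
      obtain ⟨s₁, hs₁mem, hs₁⟩ := exists_near hhyp (β n) 0 (dist (γ₁ (a - (n:ℝ))) q)
        dist_nonneg (hβiso n) (α n (sf n + u))
      rw [hβ0 n, hβd n] at hs₁
      have hnear : dist (α n (sf n + u)) (β n s₁) ≤ 3 * δ := by linarith
      have hAw : dist (γ₁ (a - (n:ℝ))) (β n s₁) = s₁ := by
        rw [← hβ0 n, hβiso n 0 ⟨le_refl _, dist_nonneg⟩ s₁ hs₁mem,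
          abs_of_nonpos (by linarith [hs₁mem.1]), neg_sub, sub_zero]
      have hwq : dist (β n s₁) q = dist (γ₁ (a - (n:ℝ))) q - s₁ := by
        conv_lhs => rw [← hβd n]
        rw [hβiso n s₁ hs₁mem _ ⟨dist_nonneg, le_refl _⟩,
          abs_of_nonpos (by linarith [hs₁mem.2]), neg_sub]
      have f2 := dist_triangle (γ₁ (a - (n:ℝ))) (β n s₁) (α n (sf n + u))
      rw [hdAv, hAw] at f2
      have f3 : dist (β n s₁) (α n (sf n + u)) = dist (α n (sf n + u)) (β n s₁) :=
        dist_comm _ _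
      have h3 := dist_triangle (α n (sf n + u)) (β n s₁) q
      have h4 := gp_move_snd m q (α n (sf n + u)) (γ₂ (b + v))
      have h5 := gp_ge_min_right hγ₂ m (le_refl b) (show b ≤ b + v by linarith)
      rw [show b - b = (0:ℝ) by ring, show b + v - b = v by ring, hγ₂b,
        min_eq_left hv] at h5
      have f6 : dist q (α n (sf n + u)) = dist (α n (sf n + u)) q := dist_comm _ _
      have f7 := hAq n
      have f8 := hslow n
      have f9 := min_le_left u v
      linarith
    · rw [min_eq_right hc] at h1
      obtain ⟨s₃, hs₃mem, hs₃⟩ := exists_near hhyp γ₂ b (b + (n:ℝ))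
        (by linarith) (fun s _ u _ => hγ₂ s u) (α n (sf n + u))
      rw [hγ₂b] at hs₃
      have hnear : dist (α n (sf n + u)) (γ₂ s₃) ≤ 3 * δ := by linarith
      have htr := dist_triangle (γ₁ (a - (n:ℝ))) q (α n (sf n + u))
      rw [hdAv] at htr
      have htr2 := dist_triangle q (γ₂ s₃) (α n (sf n + u))
      have hqs : dist q (γ₂ s₃) = s₃ - b := by
        rw [← hγ₂b, hγ₂, abs_of_nonpos (by linarith [hs₃mem.1])]; ring
      have h4 := gp_move_snd m (γ₂ s₃) (α n (sf n + u)) (γ₂ (b + v))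
      have h5 := gp_ge_min_right hγ₂ m (hs₃mem.1) (show b ≤ b + v by linarith)
      rw [show b + v - b = v by ring, hγ₂b] at h5
      have f3 : dist (γ₂ s₃) (α n (sf n + u)) = dist (α n (sf n + u)) (γ₂ s₃) :=
        dist_comm _ _
      have f7 := hAq n
      have f8 := hslow n
      have hms : min u v - (dist m p + dist p q + 9 * δ) ≤ min (s₃ - b) v := by
        refine min_shift ?_ ?_
        · have := dist_nonneg (x := m) (y := p)
          have := dist_nonneg (x := p) (y := q)
          linarith
        · linarith
      linarith
  have hminus : ∀ u v : ℝ, 0 ≤ u → v ≤ a → min u (a - v) - D0 ≤ gp m (L (-u)) (γ₁ v) := by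
    intro u v hu hv
    refine ge_of_tendsto (hgp_lim (-u) (γ₁ v)) ?_
    refine Filter.Eventually.filter_mono hUle ?_
    filter_upwards [hmemIcc (-u)] with n hn
    have hcast : (0:ℝ) ≤ (n:ℝ) := Nat.cast_nonneg n
    have hdAv : dist (γ₁ (a - (n:ℝ))) (α n (sf n + -u)) = sf n + -u := by
      rw [← hα0 n, hαiso n 0 ⟨le_refl _, dist_nonneg⟩ _ hn,
        abs_of_nonpos (by linarith [hn.1]), neg_sub, sub_zero]
    have hdvB : dist (α n (sf n + -u)) (γ₂ (b + (n:ℝ))) =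
        dist (γ₁ (a - (n:ℝ))) (γ₂ (b + (n:ℝ))) - (sf n + -u) := by
      conv_lhs => rw [← hαd n]
      rw [hαiso n _ hn _ ⟨dist_nonneg, le_refl _⟩,
        abs_of_nonpos (by linarith [hn.2]), neg_sub]
    have hgpv : gp (α n (sf n + -u)) (γ₁ (a - (n:ℝ))) (γ₂ (b + (n:ℝ))) = 0 := by
      unfold gp
      rw [dist_comm (α n (sf n + -u)) (γ₁ (a - (n:ℝ))), hdAv, hdvB]; ring
    have h1 := hhyp (α n (sf n + -u)) (γ₁ (a - (n:ℝ))) p (γ₂ (b + (n:ℝ)))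
    rw [hgpv] at h1
    rcases le_total (gp (α n (sf n + -u)) (γ₁ (a - (n:ℝ))) p)
        (gp (α n (sf n + -u)) p (γ₂ (b + (n:ℝ)))) with hc | hc
    · rw [min_eq_left hc] at h1
      obtain ⟨s₄, hs₄mem, hs₄⟩ := exists_near hhyp γ₁ (a - (n:ℝ)) a (by linarith)
        (fun s _ u _ => hγ₁ s u) (α n (sf n + -u))
      rw [hγ₁a] at hs₄
      have hnear : dist (α n (sf n + -u)) (γ₁ s₄) ≤ 3 * δ := by linarith
      have hps : dist p (γ₁ s₄) = a - s₄ := by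
        rw [← hγ₁a, hγ₁, abs_of_nonneg (by linarith [hs₄mem.2])]
      have htr := dist_triangle (α n (sf n + -u)) p (γ₂ (b + (n:ℝ)))
      rw [hdvB] at htr
      have htr2 := dist_triangle p (γ₁ s₄) (α n (sf n + -u))
      rw [hps] at htr2
      have h4 := gp_move_snd m (γ₁ s₄) (α n (sf n + -u)) (γ₁ v)
      have h5 := gp_ge_min_left hγ₁ m (hs₄mem.2) hv
      rw [hγ₁a] at h5
      have f3 : dist (γ₁ s₄) (α n (sf n + -u)) = dist (α n (sf n + -u)) (γ₁ s₄) :=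
        dist_comm _ _
      have f4 : dist (α n (sf n + -u)) p = dist p (α n (sf n + -u)) := dist_comm _ _
      have f7 := hpB n
      have f8 := hshigh n
      have hms : min u (a - v) - (dist m q + dist p q + 9 * δ) ≤ min (a - s₄) (a - v) := by
        refine min_shift ?_ ?_
        · have := dist_nonneg (x := m) (y := q)
          have := dist_nonneg (x := p) (y := q)
          linarith
        · linarith
      linarith
    · rw [min_eq_right hc] at h1
      obtain ⟨s₅, hs₅mem, hs₅⟩ := exists_near hhyp (ρ n) 0 (dist p (γ₂ (b + (n:ℝ))))
        dist_nonneg (hρiso n) (α n (sf n + -u))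
      rw [hρ0 n, hρd n] at hs₅
      have hnear : dist (α n (sf n + -u)) (ρ n s₅) ≤ 3 * δ := by linarith
      have hpw : dist p (ρ n s₅) = s₅ := by
        rw [← hρ0 n, hρiso n 0 ⟨le_refl _, dist_nonneg⟩ s₅ hs₅mem,
          abs_of_nonpos (by linarith [hs₅mem.1]), neg_sub, sub_zero]
      have hwB : dist (ρ n s₅) (γ₂ (b + (n:ℝ))) = dist p (γ₂ (b + (n:ℝ))) - s₅ := by
        conv_lhs => rw [← hρd n]
        rw [hρiso n s₅ hs₅mem _ ⟨dist_nonneg, le_refl _⟩,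
          abs_of_nonpos (by linarith [hs₅mem.2]), neg_sub]
      have htr := dist_triangle (α n (sf n + -u)) (ρ n s₅) (γ₂ (b + (n:ℝ)))
      rw [hdvB, hwB] at htr
      have htr2 := dist_triangle (α n (sf n + -u)) (ρ n s₅) p
      have f3 : dist (ρ n s₅) p = dist p (ρ n s₅) := dist_comm _ _
      have f4 : dist (α n (sf n + -u)) p = dist p (α n (sf n + -u)) := dist_comm _ _
      have h4 := gp_move_snd m p (α n (sf n + -u)) (γ₁ v)
      have h5 := gp_ge_min_left hγ₁ m (le_refl a) hv
      rw [hγ₁a, show a - a = (0:ℝ) by ring,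
        min_eq_left (show (0:ℝ) ≤ a - v by linarith)] at h5
      have f7 := hpB n
      have f8 := hshigh n
      have f9 := min_le_left u (a - v)
      linarith
  have hLgromovP : IsGromovSeq x₀ (fun n : ℕ => L n) := by
    unfold IsGromovSeq
    refine tendsto_min_aux (g := fun j : ℕ => (j:ℝ) - dist x₀ (L 0))
      (h := fun k : ℕ => (k:ℝ) - dist x₀ (L 0)) (tendsto_cast_sub _) (tendsto_cast_sub _)
      (Filter.Eventually.of_forall fun pr => ?_)
    have h := gp_ge_min_right hLline x₀ (c := 0) (s := (pr.1:ℝ)) (s' := (pr.2:ℝ))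
      (Nat.cast_nonneg _) (Nat.cast_nonneg _)
    rw [sub_zero, sub_zero] at h
    have he := min_sub (pr.1:ℝ) (pr.2:ℝ) (dist x₀ (L 0))
    simp only []
    linarith
  have hLgromovM : IsGromovSeq x₀ (fun n : ℕ => L (-(n:ℝ))) := by
    unfold IsGromovSeq
    refine tendsto_min_aux (g := fun j : ℕ => (j:ℝ) - dist x₀ (L 0))
      (h := fun k : ℕ => (k:ℝ) - dist x₀ (L 0)) (tendsto_cast_sub _) (tendsto_cast_sub _)
      (Filter.Eventually.of_forall fun pr => ?_)
    have h := gp_ge_min_left hLline x₀ (c := 0) (s := -(pr.1:ℝ)) (s' := -(pr.2:ℝ))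
      (neg_nonpos.2 (Nat.cast_nonneg _)) (neg_nonpos.2 (Nat.cast_nonneg _))
    rw [show (0:ℝ) - -(pr.1:ℝ) = (pr.1:ℝ) by ring,
      show (0:ℝ) - -(pr.2:ℝ) = (pr.2:ℝ) by ring] at h
    have he := min_sub (pr.1:ℝ) (pr.2:ℝ) (dist x₀ (L 0))
    simp only []
    linarith
  obtain ⟨hγ₂seq, hmkQ⟩ := hzQ
  obtain ⟨hγ₁seq, hmkM⟩ := hzM
  have hBP : BEquiv x₀ ⟨fun n : ℕ => L n, hLgromovP⟩ ⟨fun n : ℕ => γ₂ n, hγ₂seq⟩ := by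
    unfold BEquiv
    obtain ⟨Nb, hNb⟩ := exists_nat_ge b
    refine tendsto_min_aux (g := fun j : ℕ => (j:ℝ) - (D0 + dist m x₀))
      (h := fun k : ℕ => ((k:ℝ) - b) - (D0 + dist m x₀)) ?_ ?_ ?_
    · exact tendsto_cast_sub _
    · have := Filter.tendsto_atTop_add_const_right atTop (-b - (D0 + dist m x₀))
        (tendsto_natCast_atTop_atTop (R := ℝ))
      refine this.congr fun x => by ring
    · refine Filter.eventually_atTop.2 ⟨(0, Nb), fun pr hpr => ?_⟩
      have hk : Nb ≤ pr.2 := hpr.2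
      have hkb : b ≤ (pr.2:ℝ) := le_trans hNb (Nat.cast_le.2 hk)
      have h1 := hplus (pr.1:ℝ) ((pr.2:ℝ) - b) (Nat.cast_nonneg _) (by linarith)
      have he : γ₂ (b + ((pr.2:ℝ) - b)) = γ₂ (pr.2:ℝ) := by congr 1; ring
      rw [he] at h1
      have h2 := gp_move_base m x₀ (L (pr.1:ℝ)) (γ₂ (pr.2:ℝ))
      have he2 := min_sub (pr.1:ℝ) ((pr.2:ℝ) - b) (D0 + dist m x₀)
      simp only []
      linarith
  have hBM : BEquiv x₀ ⟨fun n : ℕ => L (-(n:ℝ)), hLgromovM⟩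
      ⟨fun n : ℕ => γ₁ (-(n:ℝ)), hγ₁seq⟩ := by
    unfold BEquiv
    obtain ⟨Na, hNa⟩ := exists_nat_ge (-a)
    refine tendsto_min_aux (g := fun j : ℕ => (j:ℝ) - (D0 + dist m x₀))
      (h := fun k : ℕ => (a + (k:ℝ)) - (D0 + dist m x₀)) ?_ ?_ ?_
    · exact tendsto_cast_sub _
    · exact tendsto_const_add_cast_sub a _
    · refine Filter.eventually_atTop.2 ⟨(0, Na), fun pr hpr => ?_⟩
      have hk : Na ≤ pr.2 := hpr.2
      have hka : -(pr.2:ℝ) ≤ a := by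
        have := le_trans hNa (Nat.cast_le.2 hk); linarith
      have h1 := hminus (pr.1:ℝ) (-(pr.2:ℝ)) (Nat.cast_nonneg _) hka
      rw [show a - -(pr.2:ℝ) = a + (pr.2:ℝ) by ring] at h1
      have h2 := gp_move_base m x₀ (L (-(pr.1:ℝ))) (γ₁ (-(pr.2:ℝ)))
      have he2 := min_sub (pr.1:ℝ) (a + (pr.2:ℝ)) (D0 + dist m x₀)
      simp only []
      linarith
  refine ⟨L 0, ⟨L, hLline, ⟨zQ, hzQC, hLgromovP, ?_⟩, ⟨zM, hzMC, hLgromovM, ?_⟩, 0, rfl⟩, hLm⟩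
  · rw [← hmkQ]; exact Quot.sound hBP
  · rw [← hmkM]; exact Quot.sound hBM
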